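/- Let 0 < a < b, N ∈ ℕ, α = (α₁,…,α_N) ∈ (0,∞)^N, and l = (l₁,…,l_N) ∈ ℝ^N with l₁ < ⋯ < l_N, and suppose GPFP(a,b,N,α,l) is a probability measure. Then the pushforward of GPFP(a,b,N,α,l) under the map x ↦ 1/x equals the measure GPFP(1/b, 1/a, N, (α_N√(ab), α_{N−1}√(ab), …, α₁√(ab)), (1−l_N, 1−l_{N−1}, …, 1−l₁)); in particular the latter is also a probability measure of GPFP type. -/

import Mathlib

open MeasureTheory Set

/-- Density of the generalized power distribution with free Poisson term:
`f(x) = (√((b-x)(x-a))/x) · Σ_k α_k x^{-l_k}`. -/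
noncomputable def gpfpDensity (a b : ℝ) (N : ℕ) (α l : Fin N → ℝ) (x : ℝ) : ℝ :=
  Real.sqrt ((b - x) * (x - a)) / x * ∑ k : Fin N, α k * x ^ (-(l k))

/-- The GPFP measure: the measure on `(a,b)` with density `gpfpDensity`. -/
noncomputable def GPFP (a b : ℝ) (N : ℕ) (α l : Fin N → ℝ) : Measure ℝ :=
  MeasureTheory.volume.withDensity
    (fun x => ENNReal.ofReal ((Set.Ioo a b).indicator (gpfpDensity a b N α l) x))

/-!
Substituting `x = y⁻¹` multiplies a density by the Jacobian `y⁻²`. Since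
`(b - y⁻¹)(y⁻¹ - a) = ab (a⁻¹ - y)(y - b⁻¹) y⁻²`, the square-root factor of the GPFP density on
`(a, b)` becomes `√(ab) y⁻¹` times the one on `(b⁻¹, a⁻¹)`, while each power `x^{-l}` becomes
`y^{l} = y · y^{-(1-l)}`. Collecting the powers of `y` gives the GPFP density with reversed
weights `α_{N+1-k} √(ab)` and exponents `1 - l_{N+1-k}`.
-/

open scoped ENNReal Pointwise

theorem Set.inv_Ioo_of_pos {a b : ℝ} (ha : 0 < a) (hb : 0 < b) : (Ioo a b)⁻¹ = Ioo b⁻¹ a⁻¹ := by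
  ext y
  simp only [mem_inv, mem_Ioo]
  constructor
  · rintro ⟨hay, hyb⟩
    have hy : 0 < y := inv_pos.1 (ha.trans hay)
    exact ⟨(inv_lt_comm₀ hy hb).1 hyb, (lt_inv_comm₀ ha hy).1 hay⟩
  · rintro ⟨hby, hya⟩
    have hy : 0 < y := (inv_pos.2 hb).trans hby
    exact ⟨(lt_inv_comm₀ ha hy).2 hya, (inv_lt_comm₀ hy hb).2 hby⟩

theorem MeasureTheory.map_inv_withDensity_indicator {s : Set ℝ} (hs : MeasurableSet s)
    (hs0 : (0 : ℝ) ∉ s) (g : ℝ → ℝ≥0∞) :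
    (volume.withDensity (s.indicator g)).map (·⁻¹) =
      volume.withDensity (s⁻¹.indicator fun y => ENNReal.ofReal (y ^ 2)⁻¹ * g y⁻¹) := by
  ext t ht
  rw [Measure.map_apply measurable_inv ht, withDensity_apply _ (measurable_inv ht),
    withDensity_apply _ ht, setLIntegral_indicator hs, setLIntegral_indicator hs.inv]
  have himage : Inv.inv '' (s⁻¹ ∩ t) = s ∩ Inv.inv ⁻¹' t := by
    rw [image_inv_eq_inv, inter_inv, inv_inv, inv_preimage]
  rw [← himage, lintegral_image_eq_lintegral_abs_deriv_mul (hs.inv.inter ht)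
    (fun y hy => (hasDerivAt_inv (by rintro rfl; exact hs0 (by simpa using hy.1))).hasDerivWithinAt)
    inv_injective.injOn]
  refine setLIntegral_congr_fun (hs.inv.inter ht) fun y _ => ?_
  rw [abs_neg, abs_of_nonneg (by positivity)]

section GPFP

variable {a b : ℝ} (N : ℕ) (α l : Fin N → ℝ)

theorem GPFP_eq_withDensity_indicator :
    GPFP a b N α l =
      volume.withDensity
        ((Ioo a b).indicator fun x => ENNReal.ofReal (gpfpDensity a b N α l x)) := by
  rw [GPFP]
  congr 1
  exact (indicator_comp_of_zero ENNReal.ofReal_zero).symm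

theorem sqrt_sub_inv_mul_inv_sub (ha : 0 < a) (hb : 0 < b) {y : ℝ} (hy : 0 < y) :
    √((b - y⁻¹) * (y⁻¹ - a)) = √(a * b) * √((a⁻¹ - y) * (y - b⁻¹)) * y⁻¹ := by
  have hfactor : (b - y⁻¹) * (y⁻¹ - a) = a * b * ((a⁻¹ - y) * (y - b⁻¹) * (y⁻¹) ^ 2) := by
    field_simp
  rw [hfactor, Real.sqrt_mul (mul_pos ha hb).le, Real.sqrt_mul' _ (sq_nonneg y⁻¹),
    Real.sqrt_sq (inv_pos.2 hy).le, mul_assoc]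

theorem sum_rev_mul_rpow_one_sub {c y : ℝ} (hy : 0 < y) :
    ∑ k : Fin N, α k.rev * c * y ^ (-(1 - l k.rev)) =
      c * y⁻¹ * ∑ k : Fin N, α k * y⁻¹ ^ (-(l k)) := by
  rw [Finset.mul_sum]
  refine Fintype.sum_equiv Fin.revPerm _ _ fun k => ?_
  simp only [Fin.revPerm_apply]
  rw [Real.inv_rpow hy.le, ← Real.rpow_neg hy.le, neg_neg, neg_sub, Real.rpow_sub hy, Real.rpow_one]
  field_simp

theorem gpfpDensity_inv (ha : 0 < a) (hb : 0 < b) {y : ℝ} (hy : 0 < y) :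
    gpfpDensity b⁻¹ a⁻¹ N (fun k => α k.rev * √(a * b)) (fun k => 1 - l k.rev) y =
      (y ^ 2)⁻¹ * gpfpDensity a b N α l y⁻¹ := by
  rw [gpfpDensity, gpfpDensity, sum_rev_mul_rpow_one_sub N α l hy,
    sqrt_sub_inv_mul_inv_sub ha hb hy]
  field_simp

end GPFP

theorem gpfp_inv (a b : ℝ) (ha : 0 < a) (hab : a < b)
    (N : ℕ) (α l : Fin N → ℝ)
    (hprob : IsProbabilityMeasure (GPFP a b N α l)) :
    Measure.map (fun x : ℝ => x⁻¹) (GPFP a b N α l) =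
      GPFP b⁻¹ a⁻¹ N (fun k => α k.rev * Real.sqrt (a * b)) (fun k => 1 - l k.rev) ∧
    IsProbabilityMeasure
      (GPFP b⁻¹ a⁻¹ N (fun k => α k.rev * Real.sqrt (a * b)) (fun k => 1 - l k.rev)) := by
  have hb : 0 < b := ha.trans hab
  have hmap : Measure.map (fun x : ℝ => x⁻¹) (GPFP a b N α l) =
      GPFP b⁻¹ a⁻¹ N (fun k => α k.rev * Real.sqrt (a * b)) (fun k => 1 - l k.rev) := by
    rw [GPFP_eq_withDensity_indicator, GPFP_eq_withDensity_indicator,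
      map_inv_withDensity_indicator measurableSet_Ioo (fun h => h.1.not_gt ha),
      inv_Ioo_of_pos ha hb]
    refine congrArg _ (indicator_congr fun y hy => ?_)
    have hy : 0 < y := (inv_pos.2 hb).trans hy.1
    rw [gpfpDensity_inv N α l ha hb hy, ENNReal.ofReal_mul (by positivity)]
  exact ⟨hmap, hmap ▸ Measure.isProbabilityMeasure_map measurable_inv.aemeasurable⟩
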